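/- Let W be a real random variable with E[W₊^{ν+4}] < ∞ and let S be a positive random variable independent of W with νS² chi-square with ν degrees of freedom. Then as x → ∞, P(W S⁻¹ > x) = a_ν x^{-ν} ( E[W₊^ν] - b_ν x^{-2} E[W₊^{ν+2}] + O(x^{-4}) ), where W₊ = max(W,0) and a_ν, b_ν are as in the chi-square tail lemma. -/

import Mathlib

open MeasureTheory ProbabilityTheory Real Filter Asymptotics Set

/-! Conditioning on `W₊ = max W 0`, which is independent of `S`, gives
`P(W / S > x) = E[F(W₊ / x)]` for `x > 0`, where `F z = P(S < z) = P(χ²_ν < ν z²)`.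
Bracketing `exp (-u)` between `1 - u` and `1 - u + u² / 2` inside the gamma density yields
`F z = a_ν z^ν - a_ν b_ν z^(ν+2) + O(z^(ν+4))` uniformly in `z ≥ 0`; integrating this against the
law of `W₊` gives the expansion, with error `O(x^(-ν-4) E[W₊^(ν+4)])`. -/

theorem abs_exp_neg_sub_one_sub_le {u : ℝ} (hu : 0 ≤ u) : |exp (-u) - (1 - u)| ≤ u ^ 2 / 2 := by
  -- `(1 - u + u²/2) (1 + u + u²/2) = 1 + u⁴/4` and `1 + u + u²/2 ≤ exp u`
  have hupper : exp (-u) ≤ 1 - u + u ^ 2 / 2 := by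
    rw [exp_neg, inv_le_iff_one_le_mul₀ (exp_pos u)]
    calc (1 : ℝ) ≤ (1 - u + u ^ 2 / 2) * (1 + u + u ^ 2 / 2) := by nlinarith [sq_nonneg u]
      _ ≤ (1 - u + u ^ 2 / 2) * exp u := by
        gcongr
        · nlinarith [sq_nonneg (u - 1)]
        · exact quadratic_le_exp_of_nonneg hu
  rw [abs_le]
  constructor <;> linarith [one_sub_le_exp_neg u]

theorem abs_gammaPDFReal_sub_le {a r x : ℝ} (ha : 0 < a) (hr : 0 ≤ r) (hx : 0 < x) :
    |gammaPDFReal a r x - r ^ a / Gamma a * (x ^ (a - 1) - r * x ^ a)|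
      ≤ r ^ a / Gamma a * r ^ 2 / 2 * x ^ (a + 1) := by
  have hk : 0 ≤ r ^ a / Gamma a * x ^ (a - 1) := by
    have := Gamma_pos_of_pos ha
    positivity
  have hxa : x ^ a = x ^ (a - 1) * x := by rw [← rpow_add_one hx.ne']; ring_nf
  have hxa1 : x ^ (a + 1) = x ^ (a - 1) * x ^ 2 := by
    rw [← rpow_natCast, ← rpow_add hx]; ring_nf
  have hdiff : gammaPDFReal a r x - r ^ a / Gamma a * (x ^ (a - 1) - r * x ^ a)
      = r ^ a / Gamma a * x ^ (a - 1) * (exp (-(r * x)) - (1 - r * x)) := by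
    rw [gammaPDFReal, if_pos hx.le, hxa]; ring
  rw [hdiff, abs_mul, abs_of_nonneg hk]
  calc r ^ a / Gamma a * x ^ (a - 1) * |exp (-(r * x)) - (1 - r * x)|
      ≤ r ^ a / Gamma a * x ^ (a - 1) * ((r * x) ^ 2 / 2) :=
        mul_le_mul_of_nonneg_left (abs_exp_neg_sub_one_sub_le (by positivity)) hk
    _ = r ^ a / Gamma a * r ^ 2 / 2 * x ^ (a + 1) := by rw [hxa1]; ring

theorem gammaMeasure_Iio_toReal {a r T : ℝ} (ha : 0 < a) (hr : 0 < r) (hT : 0 ≤ T) :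
    (gammaMeasure a r (Iio T)).toReal = ∫ x in 0..T, gammaPDFReal a r x := by
  simp only [gammaMeasure, withDensity_apply _ measurableSet_Iio, gammaPDF]
  rw [← integral_eq_lintegral_of_nonneg_ae (ae_of_all _ (gammaPDFReal_nonneg ha hr)) (by fun_prop),
    setIntegral_eq_of_subset_of_forall_sdiff_eq_zero measurableSet_Iio Ico_subset_Iio_self,
    integral_Ico_eq_integral_Ioc, intervalIntegral.integral_of_le hT]
  rintro x ⟨hxT, hx⟩
  exact if_neg fun h => hx ⟨h, hxT⟩

theorem intervalIntegrable_gammaPDFReal {a r T : ℝ} (ha : 0 < a) (hr : 0 < r) (hT : 0 ≤ T) :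
    IntervalIntegrable (gammaPDFReal a r) volume 0 T := by
  refine ((intervalIntegral.intervalIntegrable_rpow' (by linarith : -1 < a - 1)).const_mul
    (r ^ a / Gamma a)).mono_fun' (by fun_prop) ?_
  refine (ae_restrict_iff' measurableSet_uIoc).mpr (ae_of_all _ fun x hx => ?_)
  rw [uIoc_of_le hT] at hx
  have hk : 0 ≤ r ^ a / Gamma a * x ^ (a - 1) := by
    have := Gamma_pos_of_pos ha
    have := hx.1.le
    positivity
  show ‖gammaPDFReal a r x‖ ≤ _
  rw [Real.norm_of_nonneg (gammaPDFReal_nonneg ha hr x), gammaPDFReal, if_pos hx.1.le]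
  exact mul_le_of_le_one_right hk (exp_le_one_iff.mpr (by nlinarith [hx.1]))

theorem abs_gammaMeasure_Iio_sub_le {a r T : ℝ} (ha : 0 < a) (hr : 0 < r) (hT : 0 ≤ T) :
    |(gammaMeasure a r (Iio T)).toReal - r ^ a / Gamma a * (T ^ a / a - r * T ^ (a + 1) / (a + 1))|
      ≤ r ^ a / Gamma a * r ^ 2 / 2 * (T ^ (a + 2) / (a + 2)) := by
  set k := r ^ a / Gamma a
  have hpow : ∀ {q : ℝ}, -1 < q → IntervalIntegrable (fun x : ℝ => x ^ q) volume 0 T :=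
    fun hq => intervalIntegral.intervalIntegrable_rpow' hq
  have hint : ∀ {q : ℝ}, -1 < q → ∫ x in (0 : ℝ)..T, x ^ q = T ^ (q + 1) / (q + 1) := by
    intro q hq
    rw [integral_rpow (Or.inl hq), zero_rpow (by linarith), sub_zero]
  have hmain : ∫ x in (0 : ℝ)..T, k * (x ^ (a - 1) - r * x ^ a)
      = k * (T ^ a / a - r * T ^ (a + 1) / (a + 1)) := by
    rw [intervalIntegral.integral_const_mul, intervalIntegral.integral_sub (hpow (by linarith))
      ((hpow (by linarith)).const_mul r), intervalIntegral.integral_const_mul,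
      hint (by linarith), hint (by linarith), sub_add_cancel, mul_div_assoc]
  have herror : ∫ x in (0 : ℝ)..T, k * r ^ 2 / 2 * x ^ (a + 1)
      = k * r ^ 2 / 2 * (T ^ (a + 2) / (a + 2)) := by
    rw [intervalIntegral.integral_const_mul, hint (by linarith)]
    ring_nf
  rw [gammaMeasure_Iio_toReal ha hr hT, ← hmain, ← herror, ← intervalIntegral.integral_sub
    (intervalIntegrable_gammaPDFReal ha hr hT)
    (((hpow (by linarith)).sub ((hpow (by linarith)).const_mul r)).const_mul k)]
  rw [← Real.norm_eq_abs]
  refine intervalIntegral.norm_integral_le_of_norm_le hT (ae_of_all _ fun x hx => ?_)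
    ((hpow (q := a + 1) (by linarith)).const_mul _)
  exact abs_gammaPDFReal_sub_le ha hr.le hx.1

section ChiSquare

variable {Ω : Type*} [MeasurableSpace Ω] {P : Measure Ω} {S : Ω → ℝ} {ν : ℝ}

theorem measure_lt_eq_map_mul_sq (hν : 0 < ν) (hS : ∀ ω, 0 < S ω)
    (hmeas : AEMeasurable (fun ω => ν * S ω ^ 2) P) {z : ℝ} (hz : 0 ≤ z) :
    P {ω | S ω < z} = P.map (fun ω => ν * S ω ^ 2) (Iio (ν * z ^ 2)) := by
  rw [Measure.map_apply_of_aemeasurable hmeas measurableSet_Iio]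
  congr 1
  ext ω
  show S ω < z ↔ ν * S ω ^ 2 < ν * z ^ 2
  rw [mul_lt_mul_iff_right₀ hν]
  exact (sq_lt_sq₀ (hS ω).le hz).symm

theorem aemeasurable_mul_sq_of_chiSq (hν : 0 < ν)
    (hchi : Measure.map (fun ω => ν * S ω ^ 2) P = gammaMeasure (ν / 2) (1 / 2)) :
    AEMeasurable (fun ω => ν * S ω ^ 2) P := by
  have := isProbabilityMeasure_gammaMeasure (half_pos hν) one_half_pos
  exact AEMeasurable.of_map_ne_zero (hchi ▸ IsProbabilityMeasure.ne_zero _)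

theorem chiSq_cdf_expansion (hν : 0 < ν) (hS : ∀ ω, 0 < S ω)
    (hchi : Measure.map (fun ω => ν * S ω ^ 2) P = gammaMeasure (ν / 2) (1 / 2)) :
    ∃ C, ∀ z, 0 ≤ z → |(P {ω | S ω < z}).toReal - ((ν / 2) ^ (ν / 2) / Gamma (ν / 2 + 1) * z ^ ν
        - (ν / 2) ^ (ν / 2) / Gamma (ν / 2 + 1) * ((ν / 2) ^ 2 / (ν / 2 + 1)) * z ^ (ν + 2))|
      ≤ C * z ^ (ν + 4) := by
  have hmeas := aemeasurable_mul_sq_of_chiSq hν hchi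
  refine ⟨(1 / 2) ^ (ν / 2) / Gamma (ν / 2) * (1 / 2) ^ 2 / 2 * (ν ^ (ν / 2 + 2) / (ν / 2 + 2)),
    fun z hz => ?_⟩
  have hbound := abs_gammaMeasure_Iio_sub_le (half_pos hν) one_half_pos
    (by positivity : 0 ≤ ν * z ^ 2)
  have hpow : ∀ q : ℝ, (ν * z ^ 2) ^ q = ν ^ q * z ^ (2 * q) := by
    intro q
    rw [mul_rpow hν.le (sq_nonneg z), ← rpow_natCast, ← rpow_mul hz, Nat.cast_ofNat]
  have h0 : (ν * z ^ 2) ^ (ν / 2) = ν ^ (ν / 2) * z ^ ν := by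
    rw [hpow, show 2 * (ν / 2) = ν by ring]
  have h1 : (ν * z ^ 2) ^ (ν / 2 + 1) = ν ^ (ν / 2) * ν * z ^ (ν + 2) := by
    rw [hpow, rpow_add_one hν.ne', show 2 * (ν / 2 + 1) = ν + 2 by ring]
  have h2 : (ν * z ^ 2) ^ (ν / 2 + 2) = ν ^ (ν / 2 + 2) * z ^ (ν + 4) := by
    rw [hpow, show 2 * (ν / 2 + 2) = ν + 4 by ring]
  have hΓ : Gamma (ν / 2 + 1) = ν / 2 * Gamma (ν / 2) := Gamma_add_one (by positivity)
  have hhalf : (1 / 2 : ℝ) ^ (ν / 2) * ν ^ (ν / 2) = (ν / 2) ^ (ν / 2) := by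
    rw [← mul_rpow (by norm_num) hν.le]; ring_nf
  rw [← hchi, ← measure_lt_eq_map_mul_sq hν hS hmeas hz, h0, h1, h2] at hbound
  have hmain : (1 / 2) ^ (ν / 2) / Gamma (ν / 2) *
      (ν ^ (ν / 2) * z ^ ν / (ν / 2) - 1 / 2 * (ν ^ (ν / 2) * ν * z ^ (ν + 2)) / (ν / 2 + 1))
      = (ν / 2) ^ (ν / 2) / Gamma (ν / 2 + 1) * z ^ ν
        - (ν / 2) ^ (ν / 2) / Gamma (ν / 2 + 1) * ((ν / 2) ^ 2 / (ν / 2 + 1)) * z ^ (ν + 2) := by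
    rw [hΓ, ← hhalf]
    field_simp
  rw [hmain] at hbound
  exact hbound.trans_eq (by ring)

end ChiSquare

section Independence

variable {Ω α β : Type*} [MeasurableSpace Ω] [MeasurableSpace α] [MeasurableSpace β]
  {P : Measure Ω}

theorem monotone_measure_lt (X : Ω → ℝ) : Monotone fun z => P {ω | X ω < z} :=
  fun _ _ h => measure_mono fun _ hω => lt_of_lt_of_le hω h

variable [IsFiniteMeasure P]

theorem ProbabilityTheory.IndepFun.measure_mem_eq_lintegral {X : Ω → α} {Y : Ω → β}
    (h : IndepFun X Y P) (hX : AEMeasurable X P) (hY : AEMeasurable Y P) {s : Set (α × β)}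
    (hs : MeasurableSet s) :
    P {ω | (X ω, Y ω) ∈ s} = ∫⁻ ω, P {ω' | (X ω', Y ω) ∈ s} ∂P := by
  calc P {ω | (X ω, Y ω) ∈ s} = P.map (fun ω => (X ω, Y ω)) s :=
        (Measure.map_apply_of_aemeasurable (hX.prodMk hY) hs).symm
    _ = (P.map X).prod (P.map Y) s := by
        rw [(indepFun_iff_map_prod_eq_prod_map_map hX hY).mp h]
    _ = ∫⁻ y, P.map X ((fun x => (x, y)) ⁻¹' s) ∂P.map Y := Measure.prod_apply_symm hs
    _ = ∫⁻ ω, P.map X ((fun x => (x, Y ω)) ⁻¹' s) ∂P :=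
        lintegral_map' (measurable_measure_prodMk_right hs).aemeasurable hY
    _ = ∫⁻ ω, P {ω' | (X ω', Y ω) ∈ s} ∂P := by
        congr 1
        ext ω
        exact Measure.map_apply_of_aemeasurable hX (measurable_prodMk_right hs)

theorem ProbabilityTheory.IndepFun.measure_mul_lt_toReal_eq_integral {S V : Ω → ℝ}
    (h : IndepFun S V P) (hS : AEMeasurable S P) (hV : AEMeasurable V P) {x : ℝ} (hx : 0 < x) :
    (P {ω | x * S ω < V ω}).toReal = ∫ ω, (P {ω' | S ω' < V ω / x}).toReal ∂P := by
  have hset : ∀ v, {ω' | (S ω', v) ∈ {p : ℝ × ℝ | x * p.1 < p.2}} = {ω' | S ω' < v / x} := by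
    intro v
    ext ω'
    exact (lt_div_iff₀' hx).symm
  have hA : MeasurableSet {p : ℝ × ℝ | x * p.1 < p.2} :=
    measurableSet_lt (measurable_fst.const_mul x) measurable_snd
  have hmeas : AEMeasurable (fun ω => P {ω' | S ω' < V ω / x}) P :=
    (monotone_measure_lt S).measurable.comp_aemeasurable (hV.div_const x)
  calc (P {ω | x * S ω < V ω}).toReal
      = (∫⁻ ω, P {ω' | (S ω', V ω) ∈ {p : ℝ × ℝ | x * p.1 < p.2}} ∂P).toReal := by
        rw [← h.measure_mem_eq_lintegral hS hV hA]; rfl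
    _ = (∫⁻ ω, P {ω' | S ω' < V ω / x} ∂P).toReal := by simp_rw [hset]
    _ = ∫ ω, (P {ω' | S ω' < V ω / x}).toReal ∂P :=
        (integral_toReal hmeas (ae_of_all _ fun _ => measure_lt_top _ _)).symm

end Independence

section Expansion

variable {α : Type*} [MeasurableSpace α] {μ : Measure α} [IsFiniteMeasure μ]

theorem isBigO_integral_comp_div_sub {F : ℝ → ℝ} (hF : Measurable F) {V : α → ℝ}
    (hV0 : ∀ a, 0 ≤ V a) (hVm : AEMeasurable V μ) {p q s A B C : ℝ} (hp : 0 ≤ p) (hpq : p ≤ q)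
    (hqs : q ≤ s) (hVs : Integrable (fun a => V a ^ s) μ)
    (hFexp : ∀ z, 0 ≤ z → |F z - (A * z ^ p - B * z ^ q)| ≤ C * z ^ s) :
    (fun x : ℝ => ∫ a, F (V a / x) ∂μ
        - (A * x ^ (-p) * ∫ a, V a ^ p ∂μ - B * x ^ (-q) * ∫ a, V a ^ q ∂μ))
      =O[atTop] fun x => x ^ (-s) := by
  have hint : ∀ {r}, 0 ≤ r → r ≤ s → Integrable (fun a => V a ^ r) μ := by
    intro r hr hrs
    simpa only [Real.norm_of_nonneg (hV0 _)] using integrable_norm_rpow_of_le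
      hVm.aestronglyMeasurable hr (hr.trans hrs) hrs
      (by simpa only [Real.norm_of_nonneg (hV0 _)] using hVs)
  refine IsBigO.of_bound (C * ∫ a, V a ^ s ∂μ) ?_
  filter_upwards [eventually_gt_atTop 0] with x hx
  have hdiv : ∀ (r : ℝ) a, (V a / x) ^ r = x ^ (-r) * V a ^ r := fun r a => by
    rw [div_rpow (hV0 a) hx.le, rpow_neg hx.le, div_eq_inv_mul]
  set M := fun a => A * x ^ (-p) * V a ^ p - B * x ^ (-q) * V a ^ q with hM_def
  have hM : Integrable M μ :=
    ((hint hp (hpq.trans hqs)).const_mul _).sub ((hint (hp.trans hpq) hqs).const_mul _)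
  have hMint : ∫ a, M a ∂μ = A * x ^ (-p) * ∫ a, V a ^ p ∂μ - B * x ^ (-q) * ∫ a, V a ^ q ∂μ := by
    rw [integral_sub ((hint hp (hpq.trans hqs)).const_mul _)
      ((hint (hp.trans hpq) hqs).const_mul _), integral_const_mul, integral_const_mul]
  have hbound : ∀ a, ‖F (V a / x) - M a‖ ≤ C * x ^ (-s) * V a ^ s := fun a =>
    calc ‖F (V a / x) - M a‖ = |F (V a / x) - (A * (V a / x) ^ p - B * (V a / x) ^ q)| := by
          rw [hdiv p, hdiv q, Real.norm_eq_abs, hM_def]; ring_nf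
      _ ≤ C * (V a / x) ^ s := hFexp _ (div_nonneg (hV0 a) hx.le)
      _ = C * x ^ (-s) * V a ^ s := by rw [hdiv, mul_assoc]
  have hD : Integrable (fun a => F (V a / x) - M a) μ :=
    (hVs.const_mul _).mono' ((hF.comp_aemeasurable (hVm.div_const x)).aestronglyMeasurable.sub
      hM.aestronglyMeasurable) (ae_of_all _ hbound)
  rw [← hMint, ← integral_sub ((hD.add hM).congr (ae_of_all _ fun a => sub_add_cancel _ _)) hM,
    Real.norm_of_nonneg (rpow_pos_of_pos hx _).le]
  calc ‖∫ a, F (V a / x) - M a ∂μ‖ ≤ ∫ a, C * x ^ (-s) * V a ^ s ∂μ :=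
        norm_integral_le_of_norm_le (hVs.const_mul _) (ae_of_all _ hbound)
    _ = C * (∫ a, V a ^ s ∂μ) * x ^ (-s) := by rw [integral_const_mul]; ring

end Expansion

theorem product_tail_expansion
    {Ω : Type*} [MeasurableSpace Ω] (P : Measure Ω) [IsProbabilityMeasure P]
    (ν : ℝ) (hν : 0 < ν)
    (S W : Ω → ℝ) (hS : ∀ ω, 0 < S ω)
    (hchi : Measure.map (fun ω => ν * S ω ^ 2) P = gammaMeasure (ν / 2) (1 / 2))
    (hW : Integrable (fun ω => max (W ω) 0 ^ (ν + 4)) P)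
    (hindep : IndepFun S W P) :
    (fun x : ℝ =>
        (P {ω | W ω * (S ω)⁻¹ > x}).toReal -
          (ν / 2) ^ (ν / 2) / Real.Gamma (ν / 2 + 1) * x ^ (-ν) *
            ((∫ ω, max (W ω) 0 ^ ν ∂P) -
              (ν / 2) ^ 2 / (ν / 2 + 1) * x ^ (-2 : ℝ) *
                ∫ ω, max (W ω) 0 ^ (ν + 2) ∂P))
      =O[Filter.atTop] (fun x : ℝ => x ^ (-ν - 4)) := by
  set V : Ω → ℝ := fun ω => max (W ω) 0
  have hVm : AEMeasurable V P := by
    refine (hW.aemeasurable.pow_const (ν + 4)⁻¹).congr (ae_of_all _ fun ω => ?_)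
    show (max (W ω) 0 ^ (ν + 4)) ^ (ν + 4)⁻¹ = max (W ω) 0
    rw [← rpow_mul (le_max_right _ _), mul_inv_cancel₀ (by linarith), rpow_one]
  have hSm : AEMeasurable S P := by
    refine ((measurable_id.div_const ν).sqrt.comp_aemeasurable
      (aemeasurable_mul_sq_of_chiSq hν hchi)).congr (ae_of_all _ fun ω => ?_)
    simp only [Function.comp_apply, id, mul_div_cancel_left₀ _ hν.ne', sqrt_sq (hS ω).le]
  obtain ⟨C, hC⟩ := chiSq_cdf_expansion hν hS hchi
  have hexpansion := isBigO_integral_comp_div_sub (monotone_measure_lt S).measurable.ennreal_toReal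
    (fun ω => le_max_right (W ω) 0) hVm hν.le (by linarith) (by linarith) hW hC
  refine hexpansion.congr' ?_ (Eventually.of_forall fun x => by rw [neg_add'])
  filter_upwards [eventually_gt_atTop 0] with x hx
  have hevent : {ω | W ω * (S ω)⁻¹ > x} = {ω | x * S ω < V ω} := by
    ext ω
    show x < W ω * (S ω)⁻¹ ↔ x * S ω < max (W ω) 0
    rw [← div_eq_mul_inv, lt_div_iff₀ (hS ω), lt_max_iff]
    exact (or_iff_left (mul_pos hx (hS ω)).not_gt).symm
  have hindepV : IndepFun S V P := hindep.comp measurable_id (measurable_id.max measurable_const)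
  rw [hevent, hindepV.measure_mul_lt_toReal_eq_integral hSm hVm hx, rpow_neg hx.le,
    rpow_neg hx.le, rpow_neg hx.le, rpow_add hx]
  ring
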